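/- The condition number σ_y is at most one under the conditions of Theorem 2. Let (Ω, 𝓕, P) be a probability space and E a measurable event with p := P(E) satisfying 0 < p < 1. Let A and R be measurable events, let α, B ∈ ℝ, set ε := P(Rᶜ | E) and D := P(R | Eᶜ), and assume P(A | E) ≥ 1 − α, P(A | Eᶜ) ≥ B, and B − D ≥ (p/(1 − p))·(α − ε). Then for every measurable event A′, P(A′ ∩ R) ≤ P(A); in particular, if P(A) > 0, then σ := P(A′ ∩ R)/P(A) ≤ 1. -/

import Mathlib

open MeasureTheory

/-! By the law of total probability, `P(R) = p(1 − ε) + (1 − p)D` while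
`P(A) ≥ p(1 − α) + (1 − p)B`; the gap between these is `(1 − p)(B − D) − p(α − ε) ≥ 0`.
Hence `P(A′ ∩ R) ≤ P(R) ≤ P(A)`. -/

/-- The probability of an event, as a real number. -/
noncomputable def pr {Ω : Type*} [MeasurableSpace Ω] (P : Measure Ω) (A : Set Ω) : ℝ :=
  (P A).toReal

/-- Conditional probability `P(A | B) = P(A ∩ B) / P(B)`, as a real number. -/
noncomputable def cpr {Ω : Type*} [MeasurableSpace Ω] (P : Measure Ω) (A B : Set Ω) : ℝ :=
  pr P (A ∩ B) / pr P B

section ConditionalProbability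

variable {Ω : Type*} [MeasurableSpace Ω] (P : Measure Ω)

lemma pr_nonneg (X : Set Ω) : 0 ≤ pr P X := ENNReal.toReal_nonneg

lemma pr_mono [IsFiniteMeasure P] {X Y : Set Ω} (h : X ⊆ Y) : pr P X ≤ pr P Y :=
  ENNReal.toReal_mono (measure_ne_top P Y) (measure_mono h)

lemma pr_compl [IsProbabilityMeasure P] {E : Set Ω} (hE : MeasurableSet E) :
    pr P Eᶜ = 1 - pr P E := by
  simp only [pr, prob_compl_eq_one_sub hE, ENNReal.toReal_sub_of_le prob_le_one ENNReal.one_ne_top,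
    ENNReal.toReal_one]

lemma pr_inter_add_pr_inter_compl [IsFiniteMeasure P] (X : Set Ω) {E : Set Ω}
    (hE : MeasurableSet E) : pr P (X ∩ E) + pr P (X ∩ Eᶜ) = pr P X := by
  rw [pr, pr, ← ENNReal.toReal_add (measure_ne_top _ _) (measure_ne_top _ _), ← Set.sdiff_eq,
    measure_inter_add_sdiff X hE, pr]

/-- No positivity of `P Y` is needed: when `pr P Y = 0` both sides vanish. -/
lemma pr_inter_eq_cpr_mul [IsFiniteMeasure P] (X Y : Set Ω) :
    pr P (X ∩ Y) = cpr P X Y * pr P Y := by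
  rcases (pr_nonneg P Y).eq_or_lt with hY | hY
  · rw [← hY, mul_zero]
    exact le_antisymm (hY ▸ pr_mono P Set.inter_subset_right) (pr_nonneg P _)
  · rw [cpr, div_mul_cancel₀ _ hY.ne']

lemma pr_eq_cpr_mul_add_cpr_compl_mul [IsProbabilityMeasure P] (X : Set Ω) {E : Set Ω}
    (hE : MeasurableSet E) :
    pr P X = cpr P X E * pr P E + cpr P X Eᶜ * (1 - pr P E) := by
  rw [← pr_compl P hE, ← pr_inter_eq_cpr_mul, ← pr_inter_eq_cpr_mul,
    pr_inter_add_pr_inter_compl P X hE]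

lemma cpr_mul_add_cpr_compl_mul [IsFiniteMeasure P] {X : Set Ω} (hX : MeasurableSet X)
    (E : Set Ω) : cpr P X E * pr P E + cpr P Xᶜ E * pr P E = pr P E := by
  rw [← pr_inter_eq_cpr_mul, ← pr_inter_eq_cpr_mul, Set.inter_comm X, Set.inter_comm Xᶜ,
    pr_inter_add_pr_inter_compl P E hX]

end ConditionalProbability

theorem condition_number_le_one_general
    {Ω : Type*} [MeasurableSpace Ω] (P : Measure Ω) [IsProbabilityMeasure P]
    (E A R : Set Ω)
    (hE : MeasurableSet E) (hR : MeasurableSet R)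
    (hp1 : pr P E < 1)
    (α B : ℝ)
    (hAE : 1 - α ≤ cpr P A E)
    (hAEc : B ≤ cpr P A Eᶜ)
    (hBD : pr P E / (1 - pr P E) * (α - cpr P Rᶜ E) ≤ B - cpr P R Eᶜ) :
    (∀ A' : Set Ω, MeasurableSet A' → pr P (A' ∩ R) ≤ pr P A) ∧
    (0 < pr P A → ∀ A' : Set Ω, MeasurableSet A' → pr P (A' ∩ R) / pr P A ≤ 1) := by
  set p := pr P E
  have hq : 0 < 1 - p := sub_pos.2 hp1
  have hR_total := pr_eq_cpr_mul_add_cpr_compl_mul P R hE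
  have hA_total := pr_eq_cpr_mul_add_cpr_compl_mul P A hE
  have hR_split := cpr_mul_add_cpr_compl_mul P hR E
  have hBD' : p * (α - cpr P Rᶜ E) ≤ (B - cpr P R Eᶜ) * (1 - p) := by
    rwa [div_mul_eq_mul_div, div_le_iff₀ hq] at hBD
  have hRA : pr P R ≤ pr P A := by
    nlinarith [mul_le_mul_of_nonneg_right hAE (pr_nonneg P E),
      mul_le_mul_of_nonneg_right hAEc hq.le]
  have hA'R : ∀ A' : Set Ω, MeasurableSet A' → pr P (A' ∩ R) ≤ pr P A :=
    fun A' _ => (pr_mono P Set.inter_subset_right).trans hRA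
  exact ⟨hA'R, fun hpA A' hA' => (div_le_one hpA).2 (hA'R A' hA')⟩

/-- **The condition number `σ_y` is at most one under the conditions of Theorem 2.**
With `p = P(E) ∈ (0,1)`, `ε = P(Rᶜ | E)`, `D = P(R | Eᶜ)`, if `P(A | E) ≥ 1 − α`,
`P(A | Eᶜ) ≥ B`, and `B − D ≥ (p/(1 − p))·(α − ε)`, then for every measurable event `A′`
we have `P(A′ ∩ R) ≤ P(A)`; in particular, if `P(A) > 0` then
`σ = P(A′ ∩ R)/P(A) ≤ 1`. -/
theorem condition_number_le_one
    {Ω : Type*} [MeasurableSpace Ω] (P : Measure Ω) [IsProbabilityMeasure P]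
    (E A R : Set Ω)
    (hE : MeasurableSet E) (hA : MeasurableSet A) (hR : MeasurableSet R)
    (hp0 : 0 < pr P E) (hp1 : pr P E < 1)
    (α B : ℝ)
    (hAE : 1 - α ≤ cpr P A E)
    (hAEc : B ≤ cpr P A Eᶜ)
    (hBD : pr P E / (1 - pr P E) * (α - cpr P Rᶜ E) ≤ B - cpr P R Eᶜ) :
    (∀ A' : Set Ω, MeasurableSet A' → pr P (A' ∩ R) ≤ pr P A) ∧
    (0 < pr P A → ∀ A' : Set Ω, MeasurableSet A' → pr P (A' ∩ R) / pr P A ≤ 1) :=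
  condition_number_le_one_general P E A R hE hR hp1 α B hAE hAEc hBD
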